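/- Let A, B be self-adjoint operators with common domain, λ, κ ∈ ℝ, u a unit vector in the common domain, and suppose ‖e^{-itA}u - e^{-i(λ+κ)t}u‖ ≤ a·t and ‖e^{-itB}u - e^{-iλt}u‖ ≤ b·t for some a, b ≥ 0. Then the operator norm of e^{-itA} - e^{-itB} is at least 2|sin(κt/2)| - (a+b)·t for every t ≥ 0. -/

import Mathlib

open NormedSpace

lemma ContinuousLinearMap.norm_sub_le_opNorm_sub_add {𝕜 E : Type*} [NontriviallyNormedField 𝕜]
    [NormedAddCommGroup E] [NormedSpace 𝕜 E] (S T : E →L[𝕜] E) {u : E} (hu : ‖u‖ = 1)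
    (c₁ c₂ : 𝕜) : ‖c₁ - c₂‖ ≤ ‖S - T‖ + ‖S u - c₁ • u‖ + ‖T u - c₂ • u‖ := by
  have hdecomp : (c₁ - c₂) • u = (S - T) u - (S u - c₁ • u) + (T u - c₂ • u) := by
    simp only [sub_apply, sub_smul]
    abel
  calc ‖c₁ - c₂‖ = ‖(c₁ - c₂) • u‖ := by rw [norm_smul, hu, mul_one]
    _ ≤ ‖(S - T) u‖ + ‖S u - c₁ • u‖ + ‖T u - c₂ • u‖ := by
      rw [hdecomp]
      exact (norm_add_le _ _).trans (add_le_add_left (norm_sub_le _ _) _)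
    _ ≤ ‖S - T‖ + ‖S u - c₁ • u‖ + ‖T u - c₂ • u‖ := by
      gcongr
      simpa [hu] using (S - T).le_opNorm u

lemma Complex.norm_exp_neg_I_mul_sub_exp_neg_I_mul (x y : ℝ) :
    ‖Complex.exp (-(Complex.I * x)) - Complex.exp (-(Complex.I * y))‖
      = 2 * |Real.sin ((x - y) / 2)| := by
  have hfactor : Complex.exp (-(Complex.I * x)) - Complex.exp (-(Complex.I * y))
      = Complex.exp (Complex.I * ↑(-y)) * (Complex.exp (Complex.I * ↑(y - x)) - 1) := by
    rw [mul_sub, mul_one, ← Complex.exp_add]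
    push_cast
    ring_nf
  rw [hfactor, norm_mul, Complex.norm_exp_I_mul_ofReal_sub_one,
    Complex.norm_exp_I_mul_ofReal, one_mul, norm_mul, Real.norm_two, Real.norm_eq_abs,
    show (y - x) / 2 = -((x - y) / 2) by ring, Real.sin_neg, abs_neg]

theorem stmt4_general {E : Type*} [NormedAddCommGroup E] [InnerProductSpace ℂ E]
    (A B : E →L[ℂ] E)
    (u : E) (hu : ‖u‖ = 1) (lam κ a b : ℝ)
    (hAu : ∀ t : ℝ, 0 ≤ t →
      ‖exp ((-(Complex.I * t)) • A) u - Complex.exp (-(Complex.I * (lam + κ) * t)) • u‖ ≤ a * t)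
    (hBu : ∀ t : ℝ, 0 ≤ t →
      ‖exp ((-(Complex.I * t)) • B) u - Complex.exp (-(Complex.I * lam * t)) • u‖ ≤ b * t) :
    ∀ t : ℝ, 0 ≤ t →
      2 * |Real.sin (κ * t / 2)| - (a + b) * t
        ≤ ‖exp ((-(Complex.I * t)) • A) - exp ((-(Complex.I * t)) • B)‖ := by
  intro t ht
  have key := (exp ((-(Complex.I * t)) • A)).norm_sub_le_opNorm_sub_add
    (exp ((-(Complex.I * t)) • B)) hu
    (Complex.exp (-(Complex.I * ↑((lam + κ) * t)))) (Complex.exp (-(Complex.I * ↑(lam * t))))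
  rw [Complex.norm_exp_neg_I_mul_sub_exp_neg_I_mul,
    show ((lam + κ) * t - lam * t) / 2 = κ * t / 2 by ring] at key
  push_cast at key
  simp only [← mul_assoc] at key
  linarith [hAu t ht, hBu t ht]

/-- If the evolution under `A` is `a·t`-close to the phase `e^{-i(λ+κ)t}` on a unit vector `u`, and
the evolution under `B` is `b·t`-close to the phase `e^{-iλt}` on `u`, then
`‖e^{-itA} - e^{-itB}‖ ≥ 2|sin(κt/2)| - (a+b)t` for all `t ≥ 0`. -/
theorem stmt4 {E : Type*} [NormedAddCommGroup E] [InnerProductSpace ℂ E] [CompleteSpace E]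
    (A B : E →L[ℂ] E) (hA : IsSelfAdjoint A) (hB : IsSelfAdjoint B)
    (u : E) (hu : ‖u‖ = 1) (lam κ a b : ℝ) (ha : 0 ≤ a) (hb : 0 ≤ b)
    (hAu : ∀ t : ℝ, 0 ≤ t →
      ‖exp ((-(Complex.I * t)) • A) u - Complex.exp (-(Complex.I * (lam + κ) * t)) • u‖ ≤ a * t)
    (hBu : ∀ t : ℝ, 0 ≤ t →
      ‖exp ((-(Complex.I * t)) • B) u - Complex.exp (-(Complex.I * lam * t)) • u‖ ≤ b * t) :
    ∀ t : ℝ, 0 ≤ t →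
      2 * |Real.sin (κ * t / 2)| - (a + b) * t
        ≤ ‖exp ((-(Complex.I * t)) • A) - exp ((-(Complex.I * t)) • B)‖ :=
  stmt4_general A B u hu lam κ a b hAu hBu
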